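/- Let Ω ⊆ ℝ² be open, p ∈ (1, ∞) and q = p/(p−1). Suppose u and ψ are C² real-valued functions on Ω, ∇u(x) ≠ 0 for all x ∈ Ω, and ∇ψ(x) = |∇u(x)|^{p−2} · (−∂₂u(x), ∂₁u(x)) for all x ∈ Ω. Then on Ω: (i) ⟨∇u, ∇ψ⟩ = 0 and |∇ψ| = |∇u|^{p−1}; (ii) u satisfies the p-Laplace equation pointwise at every point of Ω; and (iii) ψ satisfies the q-Laplace equation pointwise at every point of Ω, i.e. |∇ψ|²·Δψ + (q−2)·⟨∇ψ, D²ψ·∇ψ⟩ = 0 on Ω. -/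

import Mathlib

open Real Set Filter Topology

/-- The planar sector `S_ν` of aperture `π/ν` with apex at the origin. -/
def Sector (ν : ℝ) : Set (ℝ × ℝ) :=
  {x | ∃ r φ : ℝ, 0 < r ∧ |φ| < π / (2*ν) ∧ x = (r * Real.cos φ, r * Real.sin φ)}

/-- First partial derivative of `u : ℝ × ℝ → ℝ`. -/
noncomputable def pdx (u : ℝ × ℝ → ℝ) (x : ℝ × ℝ) : ℝ := fderiv ℝ u x ((1 : ℝ), (0 : ℝ))

/-- Second partial derivative of `u : ℝ × ℝ → ℝ`. -/
noncomputable def pdy (u : ℝ × ℝ → ℝ) (x : ℝ × ℝ) : ℝ := fderiv ℝ u x ((0 : ℝ), (1 : ℝ))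

/-- The Laplacian `Δu`. -/
noncomputable def lap2 (u : ℝ × ℝ → ℝ) (x : ℝ × ℝ) : ℝ := pdx (pdx u) x + pdy (pdy u) x

/-- `|∇u|²`. -/
noncomputable def gradSq (u : ℝ × ℝ → ℝ) (x : ℝ × ℝ) : ℝ := (pdx u x)^2 + (pdy u x)^2

/-- `⟨∇u, D²u · ∇u⟩`. -/
noncomputable def hessQ (u : ℝ × ℝ → ℝ) (x : ℝ × ℝ) : ℝ :=
  (pdx u x)^2 * pdx (pdx u) x + 2 * pdx u x * pdy u x * pdx (pdy u) x
    + (pdy u x)^2 * pdy (pdy u) x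

/-- `u` satisfies the `p`-Laplace equation pointwise at `x`:
`|∇u(x)|² Δu(x) + (p-2) ⟨∇u(x), D²u(x) ∇u(x)⟩ = 0`. -/
def PLaplaceAt (p : ℝ) (u : ℝ × ℝ → ℝ) (x : ℝ × ℝ) : Prop :=
  gradSq u x * lap2 u x + (p - 2) * hessQ u x = 0

lemma hasFDerivAt_fderiv_apply {f : ℝ×ℝ → ℝ} {x : ℝ×ℝ} (hf : ContDiffAt ℝ 2 f x) (v : ℝ×ℝ) :
    HasFDerivAt (fun y => fderiv ℝ f y v) ((fderiv ℝ (fderiv ℝ f) x).flip v) x := by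
  have h1 : ContDiffAt ℝ 1 (fderiv ℝ f) x := hf.fderiv_right (by norm_num)
  have h2 : HasFDerivAt (fderiv ℝ f) (fderiv ℝ (fderiv ℝ f) x) x :=
    (h1.differentiableAt one_ne_zero).hasFDerivAt
  have h3 := h2.clm_apply (hasFDerivAt_const v x)
  simpa using h3

lemma hasFDerivAt_pdx {f : ℝ×ℝ → ℝ} {x : ℝ×ℝ} (hf : ContDiffAt ℝ 2 f x) :
    HasFDerivAt (pdx f) ((fderiv ℝ (fderiv ℝ f) x).flip ((1:ℝ),(0:ℝ))) x :=
  hasFDerivAt_fderiv_apply hf _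

lemma hasFDerivAt_pdy {f : ℝ×ℝ → ℝ} {x : ℝ×ℝ} (hf : ContDiffAt ℝ 2 f x) :
    HasFDerivAt (pdy f) ((fderiv ℝ (fderiv ℝ f) x).flip ((0:ℝ),(1:ℝ))) x :=
  hasFDerivAt_fderiv_apply hf _

lemma pd_comm {f : ℝ×ℝ → ℝ} {x : ℝ×ℝ} (hf : ContDiffAt ℝ 2 f x) :
    pdx (pdy f) x = pdy (pdx f) x := by
  have h := hf.isSymmSndFDerivAt (by simp [minSmoothness_of_isRCLikeNormedField]) ((1:ℝ),(0:ℝ)) ((0:ℝ),(1:ℝ))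
  have h1 : pdx (pdy f) x = fderiv ℝ (fderiv ℝ f) x ((1:ℝ),(0:ℝ)) ((0:ℝ),(1:ℝ)) := by
    show fderiv ℝ (pdy f) x _ = _
    rw [(hasFDerivAt_pdy hf).fderiv]; simp
  have h2 : pdy (pdx f) x = fderiv ℝ (fderiv ℝ f) x ((0:ℝ),(1:ℝ)) ((1:ℝ),(0:ℝ)) := by
    show fderiv ℝ (pdx f) x _ = _
    rw [(hasFDerivAt_pdx hf).fderiv]; simp
  rw [h1, h2, h]

lemma sqrt_rpow_eq {t : ℝ} (ht : 0 ≤ t) (c : ℝ) : Real.sqrt t ^ c = t ^ (c/2) := by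
  rw [Real.sqrt_eq_rpow, ← Real.rpow_mul ht]
  ring_nf

set_option maxHeartbeats 1000000 in
lemma key_lemma (p : ℝ) (Ω : Set (ℝ × ℝ)) (hΩ : IsOpen Ω) (u ψ : ℝ × ℝ → ℝ)
    (hu : ContDiffOn ℝ 2 u Ω) (hψ : ContDiffOn ℝ 2 ψ Ω)
    (hgrad : ∀ x ∈ Ω, (pdx u x, pdy u x) ≠ (0, 0))
    (hstream : ∀ x ∈ Ω,
      pdx ψ x = Real.sqrt (gradSq u x) ^ (p - 2) * (-(pdy u x)) ∧
      pdy ψ x = Real.sqrt (gradSq u x) ^ (p - 2) * pdx u x)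
    (x : ℝ × ℝ) (hx : x ∈ Ω) : PLaplaceAt p u x := by
  have hmem : Ω ∈ 𝓝 x := hΩ.mem_nhds hx
  have hux : ContDiffAt ℝ 2 u x := (hu x hx).contDiffAt hmem
  have hψx : ContDiffAt ℝ 2 ψ x := (hψ x hx).contDiffAt hmem
  set s : ℝ := (p-2)/2 with hs
  -- scalar abbreviations
  set A' := (fderiv ℝ (fderiv ℝ u) x).flip ((1:ℝ),(0:ℝ)) with hA'
  set B' := (fderiv ℝ (fderiv ℝ u) x).flip ((0:ℝ),(1:ℝ)) with hB'
  have hA : HasFDerivAt (pdx u) A' x := hasFDerivAt_pdx hux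
  have hB : HasFDerivAt (pdy u) B' x := hasFDerivAt_pdy hux
  set a := pdx u x with ha
  set b := pdy u x with hb
  set a1 := A' ((1:ℝ),(0:ℝ)) with ha1
  set a2 := A' ((0:ℝ),(1:ℝ)) with ha2
  set b1 := B' ((1:ℝ),(0:ℝ)) with hb1
  set b2 := B' ((0:ℝ),(1:ℝ)) with hb2
  set g : (ℝ×ℝ) → ℝ := fun y => pdx u y * pdx u y + pdy u y * pdy u y with hgdef
  have hgeq : ∀ y, gradSq u y = g y := fun y => by simp [gradSq, hgdef, sq]
  -- positivity
  have hgx : 0 < g x := by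
    have hne := hgrad x hx
    have : a ≠ 0 ∨ b ≠ 0 := by
      by_contra hc
      push_neg at hc
      exact hne (by simp [← ha, ← hb, hc.1, hc.2])
    have hgx' : g x = a*a + b*b := by simp [hgdef, ha, hb]
    rw [hgx']
    rcases this with h | h
    · have := mul_self_pos.mpr h; have := mul_self_nonneg b; linarith
    · have := mul_self_pos.mpr h; have := mul_self_nonneg a; linarith
  have hG : HasFDerivAt g ((a • A' + a • A') + (b • B' + b • B')) x :=
    (hA.mul hA).add (hB.mul hB)
  set Dg := (a • A' + a • A') + (b • B' + b • B') with hDg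
  have hρ : HasFDerivAt (fun y => g y ^ s) ((s * g x ^ (s-1)) • Dg) x :=
    hG.rpow_const (Or.inl hgx.ne')
  have hF1 : HasFDerivAt (fun y => g y ^ s * (-(pdy u y)))
      ((g x ^ s) • (-B') + (-(pdy u x)) • ((s * g x ^ (s-1)) • Dg)) x :=
    hρ.mul hB.neg
  have hF2 : HasFDerivAt (fun y => g y ^ s * pdx u y)
      ((g x ^ s) • A' + (pdx u x) • ((s * g x ^ (s-1)) • Dg)) x :=
    hρ.mul hA
  have hgnn : ∀ y, (0:ℝ) ≤ gradSq u y := fun y => by simp only [gradSq]; positivity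
  have hE1 : pdx ψ =ᶠ[𝓝 x] (fun y => g y ^ s * (-(pdy u y))) := by
    filter_upwards [hmem] with y hy
    rw [(hstream y hy).1, sqrt_rpow_eq (hgnn y), hgeq y]
  have hE2 : pdy ψ =ᶠ[𝓝 x] (fun y => g y ^ s * pdx u y) := by
    filter_upwards [hmem] with y hy
    rw [(hstream y hy).2, sqrt_rpow_eq (hgnn y), hgeq y]
  have hfd1 : fderiv ℝ (pdx ψ) x =
      (g x ^ s) • (-B') + (-(pdy u x)) • ((s * g x ^ (s-1)) • Dg) := by
    rw [hE1.fderiv_eq, hF1.fderiv]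
  have hfd2 : fderiv ℝ (pdy ψ) x =
      (g x ^ s) • A' + (pdx u x) • ((s * g x ^ (s-1)) • Dg) := by
    rw [hE2.fderiv_eq, hF2.fderiv]
  have hclψ : pdx (pdy ψ) x = pdy (pdx ψ) x := pd_comm hψx
  have hclu : a2 = b1 := by
    have h := pd_comm hux
    have e1 : pdx (pdy u) x = b1 := by
      show fderiv ℝ (pdy u) x _ = _
      rw [hB.fderiv]
    have e2 : pdy (pdx u) x = a2 := by
      show fderiv ℝ (pdx u) x _ = _
      rw [hA.fderiv]
    rw [e1, e2] at h; exact h.symm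
  have eq1 : pdy (pdx ψ) x = g x ^ s * (-b2)
      + (-b) * ((s * g x ^ (s-1)) * (2*a*a2 + 2*b*b2)) := by
    show fderiv ℝ (pdx ψ) x _ = _
    rw [hfd1]
    simp only [hDg, ContinuousLinearMap.add_apply, ContinuousLinearMap.smul_apply,
      ContinuousLinearMap.neg_apply, smul_eq_mul, ← ha2, ← hb2, ← ha, ← hb]
    ring
  have eq2 : pdx (pdy ψ) x = g x ^ s * a1
      + a * ((s * g x ^ (s-1)) * (2*a*a1 + 2*b*b1)) := by
    show fderiv ℝ (pdy ψ) x _ = _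
    rw [hfd2]
    simp only [hDg, ContinuousLinearMap.add_apply, ContinuousLinearMap.smul_apply,
      ContinuousLinearMap.neg_apply, smul_eq_mul, ← ha1, ← hb1, ← ha, ← hb]
    ring
  have eq : g x ^ s * a1 + a * ((s * g x ^ (s-1)) * (2*a*a1 + 2*b*b1))
      = g x ^ s * (-b2) + (-b) * ((s * g x ^ (s-1)) * (2*a*a2 + 2*b*b2)) := by
    rw [← eq1, ← eq2, hclψ]
  set G := g x with hGdef
  set r1 := G ^ (s-1) with hr1
  have hr1pos : 0 < r1 := Real.rpow_pos_of_pos hgx _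
  have hGs : G ^ s = r1 * G := by
    rw [hr1, ← Real.rpow_add_one hgx.ne' (s-1)]
    ring_nf
  have h0 : r1 * (G*(a1+b2) + (p-2)*(a^2*a1 + 2*a*b*b1 + b^2*b2)) = 0 := by
    have h2s : p - 2 = 2*s := by rw [hs]; ring
    linear_combination (1 : ℝ)*eq + (-(a1+b2))*hGs + (-2*s*r1*a*b)*hclu
      + (r1*(a^2*a1 + 2*a*b*b1 + b^2*b2))*h2s
  have hbr : G*(a1+b2) + (p-2)*(a^2*a1 + 2*a*b*b1 + b^2*b2) = 0 := by
    rcases mul_eq_zero.mp h0 with h | h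
    · exact absurd h hr1pos.ne'
    · exact h
  have e_a1 : pdx (pdx u) x = a1 := by show fderiv ℝ (pdx u) x _ = _; rw [hA.fderiv]
  have e_b1 : pdx (pdy u) x = b1 := by show fderiv ℝ (pdy u) x _ = _; rw [hB.fderiv]
  have e_b2 : pdy (pdy u) x = b2 := by show fderiv ℝ (pdy u) x _ = _; rw [hB.fderiv]
  have eG : gradSq u x = G := hgeq x
  have eG2 : G = a^2 + b^2 := by rw [hGdef, hgdef]; simp [← ha, ← hb, sq]
  unfold PLaplaceAt lap2 hessQ
  rw [e_a1, e_b1, e_b2, ← ha, ← hb, eG]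
  linarith [hbr]

theorem statement_14 (p q : ℝ) (hp : 1 < p) (hq : q = p / (p - 1))
    (Ω : Set (ℝ × ℝ)) (hΩ : IsOpen Ω) (u ψ : ℝ × ℝ → ℝ)
    (hu : ContDiffOn ℝ 2 u Ω) (hψ : ContDiffOn ℝ 2 ψ Ω)
    (hgrad : ∀ x ∈ Ω, (pdx u x, pdy u x) ≠ (0, 0))
    (hstream : ∀ x ∈ Ω,
      pdx ψ x = Real.sqrt (gradSq u x) ^ (p - 2) * (-(pdy u x)) ∧
      pdy ψ x = Real.sqrt (gradSq u x) ^ (p - 2) * pdx u x) :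
    ∀ x ∈ Ω,
      -- (i) ⟨∇u, ∇ψ⟩ = 0 and |∇ψ| = |∇u|^{p-1}
      (pdx u x * pdx ψ x + pdy u x * pdy ψ x = 0) ∧
      Real.sqrt (gradSq ψ x) = Real.sqrt (gradSq u x) ^ (p - 1) ∧
      -- (ii) u is p-harmonic at x
      PLaplaceAt p u x ∧
      -- (iii) ψ is q-harmonic at x
      PLaplaceAt q ψ x := by
  have hp1 : p - 1 ≠ 0 := by intro h; linarith [hp]
  have hpq : (p-1)*(q-2) = 2-p := by rw [hq]; field_simp; ring
  have hgpos : ∀ y ∈ Ω, 0 < gradSq u y := by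
    intro y hy
    have hne := hgrad y hy
    have h : pdx u y ≠ 0 ∨ pdy u y ≠ 0 := by
      by_contra hc; push_neg at hc
      exact hne (by simp [Prod.ext_iff, hc.1, hc.2])
    rcases h with h | h
    · have h1 : 0 < (pdx u y)^2 := by positivity
      have h2 : (0:ℝ) ≤ (pdy u y)^2 := sq_nonneg _
      simp only [gradSq]; linarith
    · have h1 : 0 < (pdy u y)^2 := by positivity
      have h2 : (0:ℝ) ≤ (pdx u y)^2 := sq_nonneg _
      simp only [gradSq]; linarith
  have hrpos : ∀ y ∈ Ω, 0 < Real.sqrt (gradSq u y) := fun y hy =>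
    Real.sqrt_pos.mpr (hgpos y hy)
  have key2 : ∀ r : ℝ, 0 < r → (r^(p-2))^2 * r^2 = (r^(p-1))^2 := by
    intro r hr
    have h1 : r ^ (p-1) = r^(p-2) * r := by
      rw [show p-1 = (p-2)+1 by ring, Real.rpow_add hr, Real.rpow_one]
    rw [h1, mul_pow]
  have hnorm : ∀ y ∈ Ω, Real.sqrt (gradSq ψ y) = Real.sqrt (gradSq u y) ^ (p - 1) := by
    intro y hy
    have e1 := (hstream y hy).1
    have e2 := (hstream y hy).2
    have h2 : gradSq ψ y = (Real.sqrt (gradSq u y)^(p-2))^2 * gradSq u y := by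
      simp only [gradSq] at e1 e2 ⊢
      rw [e1, e2]; ring
    have h1 : gradSq ψ y = (Real.sqrt (gradSq u y) ^ (p-1))^2 := by
      rw [h2]
      nth_rewrite 2 [← Real.sq_sqrt (hgpos y hy).le]
      exact key2 _ (hrpos y hy)
    rw [h1, Real.sqrt_sq (Real.rpow_nonneg (Real.sqrt_nonneg _) _)]
  have hgradψ : ∀ y ∈ Ω, (pdx ψ y, pdy ψ y) ≠ (0, 0) := by
    intro y hy h
    rw [Prod.ext_iff] at h
    simp only at h
    have hρ : 0 < Real.sqrt (gradSq u y) ^ (p-2) :=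
      Real.rpow_pos_of_pos (hrpos y hy) _
    have e1 := (hstream y hy).1
    have e2 := (hstream y hy).2
    rw [h.1] at e1; rw [h.2] at e2
    have hb0 : pdy u y = 0 := by
      have := e1.symm
      rcases mul_eq_zero.mp this with h' | h'
      · exact absurd h' hρ.ne'
      · linarith [h']
    have ha0 : pdx u y = 0 := by
      rcases mul_eq_zero.mp e2.symm with h' | h'
      · exact absurd h' hρ.ne'
      · exact h'
    exact hgrad y hy (by simp [Prod.ext_iff, ha0, hb0])
  have hstream' : ∀ y ∈ Ω,
      pdx (fun z => -u z) y = Real.sqrt (gradSq ψ y) ^ (q - 2) * (-(pdy ψ y)) ∧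
      pdy (fun z => -u z) y = Real.sqrt (gradSq ψ y) ^ (q - 2) * pdx ψ y := by
    intro y hy
    have hrp := hrpos y hy
    have hρq : Real.sqrt (gradSq ψ y) ^ (q-2) = Real.sqrt (gradSq u y) ^ (2-p) := by
      rw [hnorm y hy, ← Real.rpow_mul (Real.sqrt_nonneg _), hpq]
    have hcancel : Real.sqrt (gradSq u y)^(2-p) * Real.sqrt (gradSq u y)^(p-2) = 1 := by
      rw [← Real.rpow_add hrp]; norm_num
    have hdx : pdx (fun z => -u z) y = -(pdx u y) := by
      simp only [pdx]; rw [fderiv_fun_neg]; simp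
    have hdy : pdy (fun z => -u z) y = -(pdy u y) := by
      simp only [pdy]; rw [fderiv_fun_neg]; simp
    constructor
    · rw [hdx, hρq, (hstream y hy).2]
      linear_combination (pdx u y) * hcancel
    · rw [hdy, hρq, (hstream y hy).1]
      linear_combination (pdy u y) * hcancel
  intro x hx
  refine ⟨?_, hnorm x hx, ?_, ?_⟩
  · rw [(hstream x hx).1, (hstream x hx).2]; ring
  · exact key_lemma p Ω hΩ u ψ hu hψ hgrad hstream x hx
  · exact key_lemma q Ω hΩ ψ (fun z => -u z) hψ (hu.neg) hgradψ hstream' x hx
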